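/- arXiv:2108.06780 — 2 statements merged into one kernel-verified Lean document; each statement's English description precedes it below -/
import Mathlib

section
/- Existence of Ostrowski expansion: let x ∈ (0,1) be irrational and y ∈ [0,1). Define (x_0,y_0)=(x,y) and (x_i,y_i)=S^i(x,y) for the Ostrowski map S(x,y)=({1/x},{y/x}). Let b_i = ⌊y_{i−1}/x_{i−1}⌋. Then y = ∑_{i=1}^∞ b_i |θ_{i−1}|, where θ_n = q_n x − p_n. -/
open scoped BigOperators

/-- The Gauss map `x ↦ {1/x}` (with `T 0 = 0`). -/
noncomputable def gauss (x : ℝ) : ℝ := Int.fract (1 / x)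

/-- `cf x n = (p_{n-1}, q_{n-1})`, the continued fraction convergents of `x`,
with `p_{-1} = 1, q_{-1} = 0, p_0 = 0, q_0 = 1`,
`p_{k+1} = a_{k+1} p_k + p_{k-1}`, `q_{k+1} = a_{k+1} q_k + q_{k-1}`,
where `a_{k+1} = ⌊1 / T^k x⌋`. -/
noncomputable def cf (x : ℝ) : ℕ → ℤ × ℤ
  | 0 => (1, 0)
  | 1 => (0, 1)
  | n + 2 => (⌊1 / gauss^[n] x⌋ * (cf x (n + 1)).1 + (cf x n).1,
              ⌊1 / gauss^[n] x⌋ * (cf x (n + 1)).2 + (cf x n).2)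

/-- `pcf x n = p_{n-1}`. -/
noncomputable def pcf (x : ℝ) (n : ℕ) : ℤ := (cf x n).1

/-- `qcf x n = q_{n-1}`. -/
noncomputable def qcf (x : ℝ) (n : ℕ) : ℤ := (cf x n).2

/-- `acf x i = a_i = ⌊1 / T^{i-1} x⌋`, the `i`-th partial quotient (for `i ≥ 1`). -/
noncomputable def acf (x : ℝ) (i : ℕ) : ℤ := ⌊1 / gauss^[i - 1] x⌋

/-- `absθ x n = |θ_{n-1}| = |q_{n-1} x - p_{n-1}|` (so `absθ x 0 = 1`, `absθ x 1 = |x|`). -/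
noncomputable def absθ (x : ℝ) (n : ℕ) : ℝ := |(qcf x n : ℝ) * x - (pcf x n : ℝ)|

/-- The Ostrowski map `S(x,y) = ({1/x}, {y/x})`, with `S(0,y) = (0,0)`. -/
noncomputable def ost (p : ℝ × ℝ) : ℝ × ℝ :=
  if p.1 = 0 then (0, 0) else (Int.fract (1 / p.1), Int.fract (p.2 / p.1))

/-- `adig x y n = a_{n+1} = ⌊1 / x_n⌋` where `(x_n, y_n) = S^n (x,y)`. -/
noncomputable def adig (x y : ℝ) (n : ℕ) : ℤ := ⌊1 / (ost^[n] (x, y)).1⌋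

/-- `bdig x y n = b_{n+1} = ⌊y_n / x_n⌋` where `(x_n, y_n) = S^n (x,y)`. -/
noncomputable def bdig (x y : ℝ) (n : ℕ) : ℤ := ⌊(ost^[n] (x, y)).2 / (ost^[n] (x, y)).1⌋

/-!
Write `(x_n, y_n) = S^n (x, y)`, so that `x_n = T^n x`. Since `y_n / x_n = b_{n+1} + y_{n+1}`
and `|θ_n| = x_n |θ_{n-1}|`, the partial sums telescope:
`∑_{i<n} b_{i+1} |θ_i| = y - y_n |θ_{n-1}|`. The remainder tends to `0` because `y_n ∈ [0, 1)`
for `n ≥ 1` and `x_n x_{n+1} ≤ 1/2`, so `|θ_n|` halves every two steps.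
-/

open Filter Topology Finset

lemma gauss_lt_one (x : ℝ) : gauss x < 1 := Int.fract_lt_one _

lemma gauss_iterate_succ (x : ℝ) (n : ℕ) :
    gauss^[n + 1] x = 1 / gauss^[n] x - ⌊1 / gauss^[n] x⌋ := by
  rw [Function.iterate_succ_apply', gauss, Int.fract]

lemma irrational_gauss {x : ℝ} (h : Irrational x) : Irrational (gauss x) := by
  unfold gauss Int.fract
  rw [one_div]
  exact h.inv.sub_intCast _

lemma gauss_pos_of_irrational {x : ℝ} (h : Irrational x) : 0 < gauss x :=
  Int.fract_pos.2 (by simpa [one_div] using h.inv.ne_int _)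

lemma irrational_gauss_iterate {x : ℝ} (h : Irrational x) (n : ℕ) :
    Irrational (gauss^[n] x) := by
  induction n with
  | zero => exact h
  | succ n ih => rw [Function.iterate_succ_apply']; exact irrational_gauss ih

lemma gauss_iterate_pos {x : ℝ} (hirr : Irrational x) (hx : 0 < x) (n : ℕ) :
    0 < gauss^[n] x := by
  cases n with
  | zero => exact hx
  | succ n =>
    rw [Function.iterate_succ_apply']
    exact gauss_pos_of_irrational (irrational_gauss_iterate hirr n)

lemma gauss_iterate_lt_one {x : ℝ} (hx : x < 1) (n : ℕ) : gauss^[n] x < 1 := by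
  cases n with
  | zero => exact hx
  | succ n => rw [Function.iterate_succ_apply']; exact gauss_lt_one _

lemma mul_gauss_le_half {t : ℝ} (h0 : 0 < t) (h1 : t ≤ 1) : t * gauss t ≤ 1 / 2 := by
  rcases le_or_gt t (1 / 2) with ht | ht
  · nlinarith [Int.fract_nonneg (1 / t), gauss_lt_one t]
  · have hfloor : (1 : ℝ) ≤ ⌊1 / t⌋ := by
      exact_mod_cast Int.le_floor.2 (by rw [Int.cast_one, le_div_iff₀ h0]; linarith)
    have : t * gauss t = 1 - t * ⌊1 / t⌋ := by
      rw [gauss, Int.fract, mul_sub, mul_one_div_cancel h0.ne']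
    nlinarith

lemma ost_fst (p : ℝ × ℝ) : (ost p).1 = gauss p.1 := by
  unfold ost
  split_ifs with h
  · simp [gauss, h]
  · rfl

lemma ost_iterate_fst (p : ℝ × ℝ) (n : ℕ) : (ost^[n] p).1 = gauss^[n] p.1 :=
  (Function.Semiconj.iterate_right (f := Prod.fst) (fun q => ost_fst q) n) p

lemma ost_snd_nonneg (p : ℝ × ℝ) : 0 ≤ (ost p).2 := by
  unfold ost
  split_ifs
  exacts [le_rfl, Int.fract_nonneg _]

lemma ost_snd_lt_one (p : ℝ × ℝ) : (ost p).2 < 1 := by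
  unfold ost
  split_ifs
  exacts [zero_lt_one, Int.fract_lt_one _]

lemma ost_iterate_snd_nonneg {x y : ℝ} (hy : 0 ≤ y) (n : ℕ) : 0 ≤ (ost^[n] (x, y)).2 := by
  cases n with
  | zero => exact hy
  | succ n => rw [Function.iterate_succ_apply']; exact ost_snd_nonneg _

lemma snd_eq_fst_mul_floor_add_ost_snd {p : ℝ × ℝ} (hp : p.1 ≠ 0) :
    p.2 = p.1 * (⌊p.2 / p.1⌋ + (ost p).2) := by
  rw [ost, if_neg hp]
  dsimp only
  rw [Int.fract, add_sub_cancel, mul_div_cancel₀ _ hp]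

lemma ost_iterate_snd_eq {x y : ℝ} {n : ℕ} (hn : gauss^[n] x ≠ 0) :
    (ost^[n] (x, y)).2 = gauss^[n] x * (bdig x y n + (ost^[n + 1] (x, y)).2) := by
  have hfst := ost_iterate_fst (x, y) n
  rw [bdig, ← hfst, Function.iterate_succ_apply']
  exact snd_eq_fst_mul_floor_add_ost_snd (hfst ▸ hn)

lemma bdig_nonneg {x y : ℝ} (hy : 0 ≤ y) {n : ℕ} (hn : 0 < gauss^[n] x) :
    0 ≤ bdig x y n := by
  rw [bdig, ost_iterate_fst]
  exact Int.floor_nonneg.2 (div_nonneg (ost_iterate_snd_nonneg hy n) hn.le)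

/-- In the paper's indexing: `θ_n = -x_n θ_{n-1}`. -/
lemma qcf_mul_sub_pcf_succ {x : ℝ} (hx : ∀ k, gauss^[k] x ≠ 0) (n : ℕ) :
    (qcf x (n + 1) : ℝ) * x - pcf x (n + 1) = -gauss^[n] x * (qcf x n * x - pcf x n) := by
  induction n with
  | zero => simp [qcf, pcf, cf]
  | succ n ih =>
    have hrec : (qcf x (n + 2) : ℝ) * x - pcf x (n + 2) =
        ⌊1 / gauss^[n] x⌋ * ((qcf x (n + 1) : ℝ) * x - pcf x (n + 1))
          + (qcf x n * x - pcf x n) := by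
      simp only [qcf, pcf, cf, Int.cast_add, Int.cast_mul]
      ring
    have hprev : (qcf x n : ℝ) * x - pcf x n =
        -((qcf x (n + 1) : ℝ) * x - pcf x (n + 1)) / gauss^[n] x := by
      rw [ih]
      field_simp [hx n]
    rw [hrec, hprev, gauss_iterate_succ]
    field_simp [hx n]
    ring

lemma absθ_zero (x : ℝ) : absθ x 0 = 1 := by simp [absθ, qcf, pcf, cf]

lemma absθ_succ {x : ℝ} (hx : ∀ k, gauss^[k] x ≠ 0) (n : ℕ) :
    absθ x (n + 1) = |gauss^[n] x| * absθ x n := by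
  rw [absθ, absθ, qcf_mul_sub_pcf_succ hx, abs_mul, abs_neg]

lemma tendsto_zero_of_le_half_of_add_two {u : ℕ → ℝ} (hu : ∀ n, 0 ≤ u n)
    (hhalf : ∀ n, u (n + 2) ≤ u n / 2) : Tendsto u atTop (𝓝 0) := by
  have hpow : ∀ j m, u (j + 2 * m) ≤ u j * (1 / 2) ^ m := by
    intro j m
    induction m with
    | zero => simp
    | succ m ih =>
      calc u (j + 2 * (m + 1)) ≤ u (j + 2 * m) / 2 := hhalf _
        _ ≤ u j * (1 / 2) ^ (m + 1) := by rw [pow_succ]; linarith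
  have hbound : ∀ n, u n ≤ (u 0 + u 1) * (1 / 2) ^ (n / 2) := by
    intro n
    have hstart : u (n % 2) ≤ u 0 + u 1 := by
      rcases Nat.mod_two_eq_zero_or_one n with h | h <;> rw [h] <;> linarith [hu 0, hu 1]
    calc u n = u (n % 2 + 2 * (n / 2)) := by rw [Nat.mod_add_div]
      _ ≤ u (n % 2) * (1 / 2) ^ (n / 2) := hpow _ _
      _ ≤ (u 0 + u 1) * (1 / 2) ^ (n / 2) := by gcongr
  have hgeom : Tendsto (fun n : ℕ => (u 0 + u 1) * (1 / 2 : ℝ) ^ (n / 2)) atTop (𝓝 0) := by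
    simpa using ((tendsto_pow_atTop_nhds_zero_of_lt_one (r := (1 / 2 : ℝ))
      (by norm_num) (by norm_num)).comp
      (Nat.tendsto_div_const_atTop two_ne_zero)).const_mul (u 0 + u 1)
  exact squeeze_zero hu hbound hgeom

lemma tendsto_absθ_zero {x : ℝ} (hg : ∀ k, 0 < gauss^[k] x) (hx : x < 1) :
    Tendsto (absθ x) atTop (𝓝 0) := by
  have hne : ∀ k, gauss^[k] x ≠ 0 := fun k => (hg k).ne'
  refine tendsto_zero_of_le_half_of_add_two (fun n => abs_nonneg _) fun n => ?_
  have hprod : gauss^[n] x * gauss^[n + 1] x ≤ 1 / 2 := by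
    rw [Function.iterate_succ_apply']
    exact mul_gauss_le_half (hg n) (gauss_iterate_lt_one hx n).le
  rw [absθ_succ hne, absθ_succ hne, abs_of_pos (hg n), abs_of_pos (hg (n + 1))]
  have h0 : 0 ≤ absθ x n := abs_nonneg _
  nlinarith [mul_le_mul_of_nonneg_right hprod h0]

lemma sum_range_bdig_mul_absθ {x : ℝ} (y : ℝ) (hg : ∀ k, 0 < gauss^[k] x) (n : ℕ) :
    ∑ i ∈ range n, (bdig x y i : ℝ) * absθ x (i + 1) =
      y - (ost^[n] (x, y)).2 * absθ x n := by
  induction n with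
  | zero => simp [absθ_zero]
  | succ n ih =>
    rw [sum_range_succ, ih, absθ_succ (fun k => (hg k).ne'), abs_of_pos (hg n),
      ost_iterate_snd_eq (hg n).ne']
    ring

theorem ostrowski_expansion_exists_general (x y : ℝ) (hirr : Irrational x)
    (hx0 : 0 < x) (hx1 : x < 1) (hy0 : 0 ≤ y) :
    HasSum (fun i : ℕ => (bdig x y i : ℝ) * absθ x (i + 1)) y := by
  have hg : ∀ k, 0 < gauss^[k] x := gauss_iterate_pos hirr hx0
  have hterm : ∀ i, 0 ≤ (bdig x y i : ℝ) * absθ x (i + 1) := fun i =>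
    mul_nonneg (by exact_mod_cast bdig_nonneg hy0 (hg i)) (abs_nonneg _)
  have hremainder : Tendsto (fun n => (ost^[n] (x, y)).2 * absθ x n) atTop (𝓝 0) := by
    refine squeeze_zero' (Eventually.of_forall fun n =>
      mul_nonneg (ost_iterate_snd_nonneg hy0 n) (abs_nonneg _)) ?_ (tendsto_absθ_zero hg hx1)
    filter_upwards [eventually_ge_atTop 1] with n hn
    obtain ⟨m, rfl⟩ := Nat.exists_eq_add_of_le' hn
    rw [Function.iterate_succ_apply']
    exact mul_le_of_le_one_left (abs_nonneg _) (ost_snd_lt_one _).le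
  rw [hasSum_iff_tendsto_nat_of_nonneg hterm]
  simpa [sum_range_bdig_mul_absθ y hg] using tendsto_const_nhds.sub hremainder

/-- existence of the Ostrowski expansion:
`y = ∑_{i=1}^∞ b_i |θ_{i-1}|` where `b_i = ⌊y_{i-1}/x_{i-1}⌋`. -/
theorem ostrowski_expansion_exists (x y : ℝ) (hirr : Irrational x)
    (hx0 : 0 < x) (hx1 : x < 1) (hy0 : 0 ≤ y) (hy1 : y < 1) :
    HasSum (fun i : ℕ => (bdig x y i : ℝ) * absθ x (i + 1)) y :=
  ostrowski_expansion_exists_general x y hirr hx0 hx1 hy0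
end

section
/- Bounded distortion: there is a uniform constant L > 0 (e.g. L = 8) such that for every n ≥ 1, every sequence of admissible digit pairs (a_i,b_i) (a_i ≥ 1, 0 ≤ b_i ≤ a_i), and all (x_1,y_1), (x_2,y_2) ∈ [0,1]², one has 1/L ≤ |Jac h(x_1,y_1)| / |Jac h(x_2,y_2)| ≤ L, where h = h_{a_1,b_1} ∘ ⋯ ∘ h_{a_n,b_n}. -/
open scoped BigOperators

/-- Inverse branch `h_{a,b}(x,y) = (1/(a+x), (b+y)/(a+x))` of the Ostrowski map. -/
noncomputable def hinv (a b : ℤ) (p : ℝ × ℝ) : ℝ × ℝ :=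
  (1 / ((a : ℝ) + p.1), ((b : ℝ) + p.2) / ((a : ℝ) + p.1))

/-- `hcomp a b n = h_{a 1, b 1} ∘ ⋯ ∘ h_{a n, b n}`. -/
noncomputable def hcomp (a b : ℕ → ℤ) : ℕ → (ℝ × ℝ → ℝ × ℝ)
  | 0 => id
  | n + 1 => hcomp a b n ∘ hinv (a (n + 1)) (b (n + 1))

/-- `qrec a n = q_{n-1}`, with `q_{-1} = 0`, `q_0 = 1`, `q_{k+1} = a_{k+1} q_k + q_{k-1}`. -/
def qrec (a : ℕ → ℤ) : ℕ → ℤ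
  | 0 => 0
  | 1 => 1
  | n + 2 => a (n + 1) * qrec a (n + 1) + qrec a n

/-- `prec a n = p_{n-1}`, with `p_{-1} = 1`, `p_0 = 0`, `p_{k+1} = a_{k+1} p_k + p_{k-1}`. -/
def prec (a : ℕ → ℤ) : ℕ → ℤ
  | 0 => 1
  | 1 => 0
  | n + 2 => a (n + 1) * prec a (n + 1) + prec a n


/-!
The inverse branches are Möbius-type maps whose Jacobian is `-(a + x)⁻³`; along the composition
the factors `a_k + x_k` telescope, through the continued-fraction recursion, to the single
denominator `q_n + x q_{n-1}`, so `|Jac h(x, y)| = (q_n + x q_{n-1})⁻³`. For `x ∈ [0, 1]` this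
denominator lies in `[q_n, 2 q_n]` because `q_{n-1} ≤ q_n`, whence any two Jacobians differ by a
factor at most `2³ = 8`.
-/

theorem LinearMap.det_prod_self_eq {R : Type*} [CommRing R] (f : R × R →ₗ[R] R × R) :
    LinearMap.det f = (f (1, 0)).1 * (f (0, 1)).2 - (f (1, 0)).2 * (f (0, 1)).1 := by
  rw [← LinearMap.det_toMatrix (Module.Basis.finTwoProd R), Matrix.det_fin_two]
  simp only [LinearMap.toMatrix_apply, Module.Basis.finTwoProd_zero, Module.Basis.finTwoProd_one,
    Module.Basis.coe_finTwoProd_repr, Matrix.cons_val_zero, Matrix.cons_val_one]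
  ring

theorem ContinuousLinearMap.det_comp {R M : Type*} [CommRing R] [TopologicalSpace M]
    [AddCommGroup M] [Module R M] (f g : M →L[R] M) : (f.comp g).det = f.det * g.det :=
  LinearMap.det_comp (f : M →ₗ[R] M) g

theorem exists_hasFDerivAt_hinv_det (a b : ℤ) {p : ℝ × ℝ} (hp : (a : ℝ) + p.1 ≠ 0) :
    ∃ D : ℝ × ℝ →L[ℝ] ℝ × ℝ, HasFDerivAt (hinv a b) D p ∧ D.det = -((a : ℝ) + p.1)⁻¹ ^ 3 := by
  have hform : hinv a b =
      fun q : ℝ × ℝ => (((a : ℝ) + q.1)⁻¹, ((b : ℝ) + q.2) * ((a : ℝ) + q.1)⁻¹) := by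
    funext q
    simp [hinv, div_eq_mul_inv]
  set Dinv := (ContinuousLinearMap.smulRight (1 : ℝ →L[ℝ] ℝ) (-(((a : ℝ) + p.1) ^ 2)⁻¹)).comp
    (ContinuousLinearMap.fst ℝ ℝ ℝ)
  have hinvFirst : HasFDerivAt (fun q : ℝ × ℝ => ((a : ℝ) + q.1)⁻¹) Dinv p :=
    (hasFDerivAt_inv hp).comp p (hasFDerivAt_fst.const_add _)
  have hsecond : HasFDerivAt (fun q : ℝ × ℝ => (b : ℝ) + q.2) (ContinuousLinearMap.snd ℝ ℝ ℝ) p :=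
    hasFDerivAt_snd.const_add _
  set D := Dinv.prod (((b : ℝ) + p.2) • Dinv + ((a : ℝ) + p.1)⁻¹ • ContinuousLinearMap.snd ℝ ℝ ℝ)
  have hD₁₀ : D (1, 0) = (-(a + p.1)⁻¹ ^ 2, -((b + p.2) * (a + p.1)⁻¹ ^ 2)) := by
    simp [D, Dinv]
  have hD₀₁ : D (0, 1) = (0, (a + p.1)⁻¹) := by
    simp [D, Dinv]
  refine ⟨D, hform ▸ hinvFirst.prodMk (hsecond.mul hinvFirst), ?_⟩
  rw [ContinuousLinearMap.det, LinearMap.det_prod_self_eq, ContinuousLinearMap.coe_coe, hD₁₀, hD₀₁]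
  ring

/-- `q_n + x q_{n-1}` in the paper's indexing. -/
def qden (a : ℕ → ℤ) (n : ℕ) (x : ℝ) : ℝ :=
  qrec a (n + 1) + x * qrec a n

section Denominator

variable {a : ℕ → ℤ} {n : ℕ}

theorem qrec_nonneg_and_le_succ_and_one_le_succ (ha : ∀ i, 1 ≤ i → i ≤ n → 1 ≤ a i) :
    0 ≤ qrec a n ∧ qrec a n ≤ qrec a (n + 1) ∧ 1 ≤ qrec a (n + 1) := by
  induction n with
  | zero => simp [qrec]
  | succ m ih =>
    obtain ⟨h0, hle, h1⟩ := ih fun i hi1 hi2 => ha i hi1 (hi2.trans m.le_succ)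
    have ham : 1 ≤ a (m + 1) := ha (m + 1) le_add_self le_rfl
    have hrec : qrec a (m + 2) = a (m + 1) * qrec a (m + 1) + qrec a m := rfl
    refine ⟨h0.trans hle, ?_, ?_⟩ <;> rw [hrec] <;> nlinarith

theorem qden_zero (x : ℝ) : qden a 0 x = 1 := by
  simp [qden, qrec]

theorem qden_succ {x : ℝ} (hx : (a (n + 1) : ℝ) + x ≠ 0) :
    qden a (n + 1) x = ((a (n + 1) : ℝ) + x) * qden a n ((a (n + 1) : ℝ) + x)⁻¹ := by
  simp only [qden, qrec]
  push_cast
  field_simp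
  ring

theorem qden_mem_Icc (ha : ∀ i, 1 ≤ i → i ≤ n → 1 ≤ a i) {x : ℝ} (hx : x ∈ Set.Icc 0 1) :
    qden a n x ∈ Set.Icc (qrec a (n + 1) : ℝ) (2 * qrec a (n + 1)) := by
  obtain ⟨h0, hle, -⟩ := qrec_nonneg_and_le_succ_and_one_le_succ ha
  have h0' : (0 : ℝ) ≤ qrec a n := by exact_mod_cast h0
  have hle' : (qrec a n : ℝ) ≤ qrec a (n + 1) := by exact_mod_cast hle
  constructor <;> unfold qden <;> nlinarith [hx.1, hx.2]

theorem qden_pos (ha : ∀ i, 1 ≤ i → i ≤ n → 1 ≤ a i) {x : ℝ} (hx : 0 ≤ x) : 0 < qden a n x := by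
  obtain ⟨h0, -, h1⟩ := qrec_nonneg_and_le_succ_and_one_le_succ ha
  have h0' : (0 : ℝ) ≤ qrec a n := by exact_mod_cast h0
  have h1' : (1 : ℝ) ≤ qrec a (n + 1) := by exact_mod_cast h1
  unfold qden
  positivity

end Denominator

theorem exists_hasFDerivAt_hcomp_det {a : ℕ → ℤ} (b : ℕ → ℤ) {n : ℕ}
    (ha : ∀ i, 1 ≤ i → i ≤ n → 1 ≤ a i) {p : ℝ × ℝ} (hp : 0 ≤ p.1) :
    ∃ D : ℝ × ℝ →L[ℝ] ℝ × ℝ, HasFDerivAt (hcomp a b n) D p ∧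
      D.det = (-1) ^ n / qden a n p.1 ^ 3 := by
  induction n generalizing p with
  | zero =>
    exact ⟨_, hasFDerivAt_id p, by simp [qden_zero, ContinuousLinearMap.det, LinearMap.det_id]⟩
  | succ m ih =>
    have ham : (1 : ℝ) ≤ a (m + 1) := by exact_mod_cast ha (m + 1) le_add_self le_rfl
    have hpos : (0 : ℝ) < a (m + 1) + p.1 := by linarith
    obtain ⟨D₁, hD₁, hdet₁⟩ := exists_hasFDerivAt_hinv_det (a (m + 1)) (b (m + 1)) hpos.ne'
    have hq : (hinv (a (m + 1)) (b (m + 1)) p).1 = ((a (m + 1) : ℝ) + p.1)⁻¹ := one_div _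
    have ham' : ∀ i, 1 ≤ i → i ≤ m → 1 ≤ a i := fun i hi1 hi2 => ha i hi1 (hi2.trans m.le_succ)
    have hq₀ : 0 ≤ ((a (m + 1) : ℝ) + p.1)⁻¹ := inv_nonneg.mpr hpos.le
    obtain ⟨D₂, hD₂, hdet₂⟩ := ih ham' (hq ▸ hq₀)
    refine ⟨D₂.comp D₁, hD₂.comp p hD₁, ?_⟩
    have hden := qden_pos ham' hq₀
    rw [ContinuousLinearMap.det_comp, hdet₁, hdet₂, hq, qden_succ hpos.ne']
    field_simp
    ring

theorem abs_det_fderiv_hcomp {a : ℕ → ℤ} (b : ℕ → ℤ) {n : ℕ}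
    (ha : ∀ i, 1 ≤ i → i ≤ n → 1 ≤ a i) {p : ℝ × ℝ} (hp : 0 ≤ p.1) :
    |(fderiv ℝ (hcomp a b n) p).det| = (qden a n p.1 ^ 3)⁻¹ := by
  obtain ⟨D, hD, hdet⟩ := exists_hasFDerivAt_hcomp_det b ha hp
  rw [hD.fderiv, hdet, abs_div, abs_pow, abs_neg, abs_one, one_pow, one_div,
    abs_of_pos (pow_pos (qden_pos ha hp) 3)]

theorem pow_div_pow_mem_Icc {x y c : ℝ} (hx : 0 < x) (hy : 0 < y) (hxy : x ≤ c * y)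
    (hyx : y ≤ c * x) (k : ℕ) : x ^ k / y ^ k ∈ Set.Icc (1 / c ^ k) (c ^ k) := by
  have hc : 0 < c := pos_of_mul_pos_left (hx.trans_le hxy) hy.le
  rw [← div_pow, ← one_div_pow]
  exact ⟨pow_le_pow_left₀ (by positivity) (by rw [div_le_div_iff₀ hc hy]; linarith) k,
    pow_le_pow_left₀ (by positivity) (by rwa [div_le_iff₀ hy]) k⟩

/-- bounded distortion of the Jacobian of depth-`n` inverse branches. -/
theorem bounded_distortion :
    ∃ L : ℝ, 0 < L ∧
      ∀ (n : ℕ), 1 ≤ n → ∀ (a b : ℕ → ℤ),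
        (∀ i, 1 ≤ i → i ≤ n → 1 ≤ a i ∧ 0 ≤ b i ∧ b i ≤ a i) →
        ∀ p₁ p₂ : ℝ × ℝ,
          p₁ ∈ Set.Icc (0 : ℝ) 1 ×ˢ Set.Icc (0 : ℝ) 1 →
          p₂ ∈ Set.Icc (0 : ℝ) 1 ×ˢ Set.Icc (0 : ℝ) 1 →
          1 / L ≤ |(fderiv ℝ (hcomp a b n) p₁).det| / |(fderiv ℝ (hcomp a b n) p₂).det| ∧
          |(fderiv ℝ (hcomp a b n) p₁).det| / |(fderiv ℝ (hcomp a b n) p₂).det| ≤ L := by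
  refine ⟨2 ^ 3, by norm_num, fun n _ a b hab p₁ p₂ hp₁ hp₂ => ?_⟩
  have ha : ∀ i, 1 ≤ i → i ≤ n → 1 ≤ a i := fun i hi1 hi2 => (hab i hi1 hi2).1
  rw [abs_det_fderiv_hcomp b ha hp₁.1.1, abs_det_fderiv_hcomp b ha hp₂.1.1, inv_div_inv]
  obtain ⟨hl₁, hu₁⟩ := qden_mem_Icc ha hp₁.1
  obtain ⟨hl₂, hu₂⟩ := qden_mem_Icc ha hp₂.1
  exact pow_div_pow_mem_Icc (qden_pos ha hp₂.1.1) (qden_pos ha hp₁.1.1) (by linarith)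
    (by linarith) 3
end
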